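/- Let $P_n(x)$ be the sequence of real polynomials defined by $P_0(x)=1$, $P_1(x)=x^2+4x+1$, and $P_n(x)=(x^2+4x+1)P_{n-1}(x)-x^2P_{n-2}(x)$ for $n\ge 2$, and write $s(P_n,k)$ for the coefficient of $x^k$ in $P_n(x)$. Then for every $n\ge 1$, the coefficient sequence is log-concave: $s(P_n,k)^2\ge s(P_n,k-1)\,s(P_n,k+1)$ for all $1\le k\le 2n-1$. -/

import Mathlib

open Polynomial

/-- The sextet polynomials of the pyrene chains. -/
noncomputable def pyreneP : ℕ → Polynomial ℝ
  | 0 => 1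
  | 1 => X ^ 2 + 4 * X + 1
  | (n + 2) => (X ^ 2 + 4 * X + 1) * pyreneP (n + 1) - X ^ 2 * pyreneP n


/-- Strong log-concavity of a ℤ-indexed nonnegative sequence. -/
def SLC (c : ℤ → ℝ) : Prop :=
  (∀ i, 0 ≤ c i) ∧ ∀ a b : ℤ, a ≤ b → c (a - 1) * c (b + 1) ≤ c a * c b

lemma SLC.multistep {c : ℤ → ℝ} (h : SLC c) :
    ∀ (r : ℕ) (a b : ℤ), a ≤ b → c (a - r) * c (b + r) ≤ c a * c b := by
  intro r
  induction r with
  | zero => intro a b _; simp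
  | succ r ih =>
    intro a b hab
    have h1 := h.2 (a - r) (b + r) (by omega)
    have h2 := ih a b hab
    have : c (a - (r + 1 : ℕ)) * c (b + (r + 1 : ℕ))
        = c ((a - r) - 1) * c ((b + r) + 1) := by
      congr 2 <;> push_cast <;> ring
    rw [this]
    exact h1.trans h2

lemma SLC.wide {c : ℤ → ℝ} (h : SLC c) {u v p q : ℤ}
    (hup : u ≤ p) (huq : u ≤ q) (hsum : u + v = p + q) :
    c u * c v ≤ c p * c q := by
  rcases le_total p q with hpq | hpq
  · have := h.multistep (p - u).toNat p q hpq
    have e1 : p - ((p - u).toNat : ℤ) = u := by omega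
    have e2 : q + ((p - u).toNat : ℤ) = v := by omega
    rwa [e1, e2] at this
  · have := h.multistep (q - u).toNat q p hpq
    have e1 : q - ((q - u).toNat : ℤ) = u := by omega
    have e2 : p + ((q - u).toNat : ℤ) = v := by omega
    rw [e1, e2] at this
    linarith [this, mul_comm (c u) (c v), mul_comm (c q) (c p)]

lemma SLC.step {c : ℤ → ℝ} (h : SLC c) {β : ℝ} (hβ : 0 ≤ β) :
    SLC (fun k => β * c k + c (k - 1)) := by
  constructor
  · intro i
    exact add_nonneg (mul_nonneg hβ (h.1 _)) (h.1 _)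
  · intro k m hkm
    simp only
    have B1 : c (k - 1) * c (m + 1) ≤ c k * c m := h.2 k m hkm
    have B2 : c (k - 2) * c (m + 1) ≤ c k * c (m - 1) :=
      h.wide (by omega) (by omega) (by ring)
    have B3 : c (k - 2) * c m ≤ c (k - 1) * c (m - 1) :=
      h.wide (by omega) (by omega) (by ring)
    have e1 : k - 1 - 1 = k - 2 := by ring
    have e2 : m + 1 - 1 = m := by ring
    rw [e1, e2]
    nlinarith [mul_nonneg (mul_nonneg hβ hβ) (sub_nonneg.2 B1),
      mul_nonneg hβ (sub_nonneg.2 B2), sub_nonneg.2 B3]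


/-- coefficients of a real polynomial, extended to ℤ. -/
noncomputable def eco (p : ℝ[X]) : ℤ → ℝ := fun i => if 0 ≤ i then p.coeff i.toNat else 0

lemma eco_X_add_C_mul (β : ℝ) (p : ℝ[X]) (k : ℤ) :
    eco ((X + C β) * p) k = β * eco p k + eco p (k - 1) := by
  unfold eco
  rcases lt_trichotomy k 0 with hk | hk | hk
  · rw [if_neg (by omega), if_neg (by omega), if_neg (by omega)]; ring
  · subst hk
    norm_num [add_mul, coeff_C_mul, mul_comm]
  · rw [if_pos (by omega), if_pos (by omega), if_pos (by omega)]
    obtain ⟨m, hm⟩ : ∃ m : ℕ, k = (m : ℤ) + 1 := ⟨(k - 1).toNat, by omega⟩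
    subst hm
    have h1 : ((m : ℤ) + 1).toNat = m + 1 := by omega
    have h2 : ((m : ℤ) + 1 - 1).toNat = m := by omega
    rw [h1, h2, add_mul, coeff_add, coeff_X_mul, coeff_C_mul]
    ring

lemma slc_one : SLC (eco 1) := by
  have h0 : ∀ i, 0 ≤ eco 1 i := by
    intro i
    unfold eco
    split
    · rw [coeff_one]; split <;> norm_num
    · exact le_refl 0
  refine ⟨h0, ?_⟩
  intro a b hab
  have hz : eco 1 (a - 1) * eco 1 (b + 1) = 0 := by
    rcases eq_or_ne a 1 with h | h
    · have : eco 1 (b + 1) = 0 := by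
        unfold eco
        rw [if_pos (by omega)]
        rw [coeff_one]
        rw [if_neg (by omega)]
      rw [this, mul_zero]
    · have : eco 1 (a - 1) = 0 := by
        unfold eco
        split
        · rw [coeff_one, if_neg (by omega)]
        · rfl
      rw [this, zero_mul]
  rw [hz]
  exact mul_nonneg (h0 _) (h0 _)

lemma slc_prod (s : Multiset ℝ) (hs : ∀ β ∈ s, 0 ≤ β) :
    SLC (eco (s.map (fun β => X + C β)).prod) := by
  induction s using Multiset.induction with
  | empty => simpa using slc_one
  | cons β s ih =>
    have hβ : 0 ≤ β := hs β (Multiset.mem_cons_self β s)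
    have ih' := ih (fun x hx => hs x (Multiset.mem_cons_of_mem hx))
    rw [Multiset.map_cons, Multiset.prod_cons]
    have : eco ((X + C β) * (s.map (fun β => X + C β)).prod)
        = fun k => β * eco (s.map (fun β => X + C β)).prod k
            + eco (s.map (fun β => X + C β)).prod (k - 1) := by
      funext k; exact eco_X_add_C_mul β _ k
    rw [this]
    exact ih'.step hβ

lemma q_monic : (X ^ 2 + 4 * X + 1 : ℝ[X]).Monic := by
  have : (X ^ 2 + 4 * X + 1 : ℝ[X]) = X ^ 2 + (4 * X + 1) := by ring
  rw [this]
  apply monic_X_pow_add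
  exact lt_of_le_of_lt (by compute_degree) (by norm_num : (1 : WithBot ℕ) < 2)

lemma q_natDegree : (X ^ 2 + 4 * X + 1 : ℝ[X]).natDegree = 2 := by
  compute_degree!

lemma pyreneP_monic (n : ℕ) : (pyreneP n).Monic ∧ (pyreneP n).natDegree = 2 * n := by
  induction n using Nat.strong_induction_on with
  | _ n ih =>
    match n with
    | 0 => constructor <;> simp [pyreneP, monic_one]
    | 1 => exact ⟨q_monic, q_natDegree⟩
    | (m + 2) =>
      obtain ⟨h1m, h1d⟩ := ih (m + 1) (by omega)
      obtain ⟨h0m, h0d⟩ := ih m (by omega)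
      have hqm : ((X ^ 2 + 4 * X + 1 : ℝ[X]) * pyreneP (m + 1)).Monic := q_monic.mul h1m
      have hqd : ((X ^ 2 + 4 * X + 1 : ℝ[X]) * pyreneP (m + 1)).natDegree = 2 * m + 4 := by
        rw [q_monic.natDegree_mul h1m, q_natDegree, h1d]; ring
      have hxm : ((X : ℝ[X]) ^ 2 * pyreneP m).Monic := (monic_X_pow 2).mul h0m
      have hxd : ((X : ℝ[X]) ^ 2 * pyreneP m).natDegree = 2 * m + 2 := by
        rw [(monic_X_pow 2).natDegree_mul h0m, natDegree_X_pow, h0d]; omega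
      have hdeglt : ((X : ℝ[X]) ^ 2 * pyreneP m).degree
          < ((X ^ 2 + 4 * X + 1 : ℝ[X]) * pyreneP (m + 1)).degree := by
        rw [degree_eq_natDegree hxm.ne_zero, degree_eq_natDegree hqm.ne_zero, hxd, hqd]
        exact_mod_cast (by omega : 2 * m + 2 < 2 * m + 4)
      have hP : pyreneP (m + 2)
          = (X ^ 2 + 4 * X + 1) * pyreneP (m + 1) - X ^ 2 * pyreneP m := rfl
      constructor
      · rw [hP, sub_eq_add_neg]
        exact hqm.add_of_left (by rw [degree_neg]; exact hdeglt)
      · rw [hP, natDegree_sub_eq_left_of_natDegree_lt (by rw [hxd, hqd]; omega), hqd]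
        omega

open Polynomial.Chebyshev in
lemma pyreneP_eval_eq (y r : ℝ) (hr : r ^ 2 + 4 * r + 1 = 2 * r * y) :
    ∀ n : ℕ, (pyreneP n).eval r = r ^ n * (U ℝ n).eval y := by
  intro n
  induction n using Nat.strong_induction_on with
  | _ n ih =>
    match n with
    | 0 => simp [pyreneP]
    | 1 =>
      show (X ^ 2 + 4 * X + 1 : ℝ[X]).eval r = _
      have : ((1 : ℕ) : ℤ) = 1 := rfl
      rw [this, U_one]
      simp only [eval_add, eval_mul, eval_pow, eval_X, eval_one, eval_ofNat]
      linear_combination hr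
    | (m + 2) =>
      have h1 := ih (m + 1) (by omega)
      have h0 := ih m (by omega)
      have hP : pyreneP (m + 2)
          = (X ^ 2 + 4 * X + 1) * pyreneP (m + 1) - X ^ 2 * pyreneP m := rfl
      have hc : ((m + 2 : ℕ) : ℤ) = (m : ℤ) + 2 := by push_cast; ring
      have hc1 : ((m + 1 : ℕ) : ℤ) = (m : ℤ) + 1 := by push_cast; ring
      have hU : U ℝ ((m : ℤ) + 2) = 2 * X * U ℝ ((m : ℤ) + 1) - U ℝ (m : ℤ) :=
        U_add_two ℝ (m : ℤ)
      rw [hc1] at h1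
      rw [hP, hc, hU]
      simp only [eval_sub, eval_mul, eval_add, eval_pow, eval_X, eval_one, eval_ofNat] at *
      rw [h1, h0]
      linear_combination ((U ℝ ((m : ℤ) + 1)).eval y * r ^ (m + 1)) * hr

open Real

/-- angles -/
noncomputable def pyT (n j : ℕ) : ℝ := ((j : ℝ) + 1) * π / ((n : ℝ) + 1)
noncomputable def pyB (n j : ℕ) : ℝ := 4 - 2 * Real.cos (pyT n j)
noncomputable def pyR (n j : ℕ) (σ : Bool) : ℝ :=
  (-(pyB n j) + (if σ then 1 else -1) * Real.sqrt ((pyB n j) ^ 2 - 4)) / 2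

lemma pyT_pos (n j : ℕ) : 0 < pyT n j := by
  unfold pyT
  apply div_pos (by positivity)
  positivity

lemma pyT_lt_pi {n j : ℕ} (h : j < n) : pyT n j < π := by
  unfold pyT
  rw [div_lt_iff₀ (by positivity)]
  have hj : (j : ℝ) + 1 < (n : ℝ) + 1 := by exact_mod_cast Nat.succ_lt_succ h
  nlinarith [pi_pos]

lemma pyB_gt_two {n j : ℕ} (h : j < n) : 2 < pyB n j := by
  unfold pyB
  have h1 : Real.cos (pyT n j) < Real.cos 0 := by
    apply Real.strictAntiOn_cos ⟨le_refl 0, le_of_lt pi_pos⟩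
      ⟨le_of_lt (pyT_pos n j), le_of_lt (pyT_lt_pi h)⟩ (pyT_pos n j)
  rw [Real.cos_zero] at h1
  linarith

lemma pyB_sq {n j : ℕ} (h : j < n) : 0 < (pyB n j) ^ 2 - 4 := by
  have := pyB_gt_two h
  nlinarith

lemma pyR_quad {n j : ℕ} (h : j < n) (σ : Bool) :
    (pyR n j σ) ^ 2 + pyB n j * pyR n j σ + 1 = 0 := by
  have hs : Real.sqrt ((pyB n j) ^ 2 - 4) ^ 2 = (pyB n j) ^ 2 - 4 :=
    Real.sq_sqrt (le_of_lt (pyB_sq h))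
  unfold pyR
  cases σ
  · rw [if_neg (by simp)]
    linear_combination hs / 4
  · rw [if_pos rfl]
    linear_combination hs / 4

lemma pyR_neg {n j : ℕ} (h : j < n) (σ : Bool) : pyR n j σ < 0 := by
  have hb := pyB_gt_two h
  have hsq : Real.sqrt ((pyB n j) ^ 2 - 4) < pyB n j := by
    have h2 : Real.sqrt ((pyB n j) ^ 2 - 4) < Real.sqrt ((pyB n j) ^ 2) :=
      Real.sqrt_lt_sqrt (le_of_lt (pyB_sq h)) (by nlinarith)
    rwa [Real.sqrt_sq (by linarith)] at h2
  have hs0 : 0 ≤ Real.sqrt ((pyB n j) ^ 2 - 4) := Real.sqrt_nonneg _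
  unfold pyR
  cases σ
  · rw [if_neg (by simp)]
    nlinarith
  · rw [if_pos rfl]
    nlinarith

lemma pyR_ne_zero {n j : ℕ} (h : j < n) (σ : Bool) : pyR n j σ ≠ 0 :=
  ne_of_lt (pyR_neg h σ)

lemma pyU_eval_zero {n j : ℕ} (h : j < n) :
    (Polynomial.Chebyshev.U ℝ (n : ℤ)).eval (Real.cos (pyT n j)) = 0 := by
  have key := Polynomial.Chebyshev.U_real_cos (pyT n j) (n : ℤ)
  have hθ : (((n : ℤ) : ℝ) + 1) * pyT n j = ((j : ℝ) + 1) * π := by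
    unfold pyT
    have : ((n : ℝ) + 1) ≠ 0 := by positivity
    push_cast
    field_simp
  rw [hθ] at key
  have hz : Real.sin (((j : ℝ) + 1) * π) = 0 := by
    have := Real.sin_nat_mul_pi (j + 1)
    push_cast at this
    exact this
  rw [hz] at key
  have hsθ : Real.sin (pyT n j) ≠ 0 :=
    ne_of_gt (Real.sin_pos_of_pos_of_lt_pi (pyT_pos n j) (pyT_lt_pi h))
  exact (mul_eq_zero.1 key).resolve_right hsθ

lemma pyR_root {n j : ℕ} (h : j < n) (σ : Bool) :
    (pyreneP n).IsRoot (pyR n j σ) := by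
  set r := pyR n j σ with hrdef
  have hq := pyR_quad h σ
  have hcos : r ^ 2 + 4 * r + 1 = 2 * r * Real.cos (pyT n j) := by
    unfold pyB at hq
    linear_combination hq
  have := pyreneP_eval_eq (Real.cos (pyT n j)) r hcos n
  unfold IsRoot
  rw [this, pyU_eval_zero h, mul_zero]

lemma pyB_inj {n j j' : ℕ} (hj : j < n) (hj' : j' < n) (h : pyB n j = pyB n j') :
    j = j' := by
  have hcos : Real.cos (pyT n j) = Real.cos (pyT n j') := by
    unfold pyB at h; linarith
  have hθ : pyT n j = pyT n j' :=
    Real.injOn_cos ⟨le_of_lt (pyT_pos n j), le_of_lt (pyT_lt_pi hj)⟩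
      ⟨le_of_lt (pyT_pos n j'), le_of_lt (pyT_lt_pi hj')⟩ hcos
  unfold pyT at hθ
  have hne : ((n : ℝ) + 1) ≠ 0 := by positivity
  have hπ := Real.pi_ne_zero
  field_simp at hθ
  exact_mod_cast add_right_cancel hθ

lemma pyR_inj {n j j' : ℕ} (hj : j < n) (hj' : j' < n) {σ σ' : Bool}
    (h : pyR n j σ = pyR n j' σ') : j = j' ∧ σ = σ' := by
  have hq := pyR_quad hj σ
  have hq' := pyR_quad hj' σ'
  rw [h] at hq
  have hb : pyB n j = pyB n j' := by
    have hr0 := pyR_ne_zero hj' σ'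
    have : (pyB n j - pyB n j') * pyR n j' σ' = 0 := by linear_combination hq - hq'
    rcases mul_eq_zero.1 this with h1 | h1
    · linarith [sub_eq_zero.1 h1]
    · exact absurd h1 hr0
  have hjj : j = j' := pyB_inj hj hj' hb
  subst hjj
  refine ⟨rfl, ?_⟩
  by_contra hσ
  have hs : Real.sqrt ((pyB n j) ^ 2 - 4) = 0 := by
    unfold pyR at h
    rw [hb] at h
    cases σ <;> cases σ'
    · exact absurd rfl hσ
    · rw [if_neg (by simp), if_pos rfl] at h
      linarith
    · rw [if_pos rfl, if_neg (by simp)] at h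
      linarith
    · exact absurd rfl hσ
  have := pyB_sq hj
  rw [Real.sqrt_eq_zero (by linarith)] at hs
  linarith

/-- the root set -/
noncomputable def pyS (n : ℕ) : Finset ℝ :=
  Finset.image (fun p : ℕ × Bool => pyR n p.1 p.2) ((Finset.range n) ×ˢ Finset.univ)

lemma pyS_card (n : ℕ) : (pyS n).card = 2 * n := by
  unfold pyS
  rw [Finset.card_image_of_injOn ?_]
  · rw [Finset.card_product, Finset.card_range, Finset.card_univ, Fintype.card_bool]
    ring
  · intro p hp p' hp' h
    simp only [Finset.coe_product, Set.mem_prod, Finset.mem_coe, Finset.mem_range] at hp hp'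
    obtain ⟨h1, h2⟩ := pyR_inj hp.1 hp'.1 h
    exact Prod.ext h1 h2

lemma pyS_root {n : ℕ} {r : ℝ} (hr : r ∈ pyS n) : (pyreneP n).IsRoot r := by
  unfold pyS at hr
  simp only [Finset.mem_image, Finset.mem_product, Finset.mem_range] at hr
  obtain ⟨⟨j, σ⟩, ⟨hj, -⟩, rfl⟩ := hr
  exact pyR_root hj σ

lemma pyS_neg {n : ℕ} {r : ℝ} (hr : r ∈ pyS n) : r < 0 := by
  unfold pyS at hr
  simp only [Finset.mem_image, Finset.mem_product, Finset.mem_range] at hr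
  obtain ⟨⟨j, σ⟩, ⟨hj, -⟩, rfl⟩ := hr
  exact pyR_neg hj σ

lemma pyreneP_eq_prod (n : ℕ) : pyreneP n = ∏ r ∈ pyS n, (X - C r) := by
  classical
  obtain ⟨hmonic, hdeg⟩ := pyreneP_monic n
  have hne : pyreneP n ≠ 0 := hmonic.ne_zero
  have hle : (pyS n).val ≤ (pyreneP n).roots := by
    rw [Multiset.le_iff_count]
    intro r
    by_cases hr : r ∈ pyS n
    · rw [Multiset.count_eq_one_of_mem (pyS n).nodup hr, Polynomial.count_roots]
      exact (Polynomial.rootMultiplicity_pos hne).2 (pyS_root hr)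
    · rw [Multiset.count_eq_zero_of_notMem hr]
      exact Nat.zero_le _
  have hdvd : (∏ r ∈ pyS n, (X - C r)) ∣ pyreneP n := by
    rw [Finset.prod_eq_multiset_prod]
    exact (Multiset.prod_X_sub_C_dvd_iff_le_roots hne _).2 hle
  obtain ⟨c, hc⟩ := hdvd
  have hQmonic : (∏ r ∈ pyS n, (X - C r)).Monic :=
    monic_prod_of_monic _ _ fun r _ => monic_X_sub_C r
  have hQdeg : (∏ r ∈ pyS n, (X - C r)).natDegree = 2 * n := by
    rw [Polynomial.natDegree_prod _ _ fun r _ => X_sub_C_ne_zero r]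
    simp [pyS_card n]
  have hcmonic : c.Monic := hQmonic.of_mul_monic_left (hc ▸ hmonic)
  have hcdeg : c.natDegree = 0 := by
    have := natDegree_mul (hQmonic.ne_zero) (hcmonic.ne_zero)
    rw [← hc, hdeg, hQdeg] at this
    omega
  have : c = 1 := (Polynomial.Monic.natDegree_eq_zero hcmonic).1 hcdeg
  rw [hc, this, mul_one]


lemma pyreneP_slc (n : ℕ) : SLC (eco (pyreneP n)) := by
  have hfac := pyreneP_eq_prod n
  set s : Multiset ℝ := (pyS n).val.map (fun r => -r) with hs
  have hmap : s.map (fun β => X + C β) = (pyS n).val.map (fun r => X - C r) := by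
    rw [hs, Multiset.map_map]
    apply Multiset.map_congr rfl
    intro r _
    simp only [Function.comp_apply, map_neg, sub_eq_add_neg]
  have hprod : pyreneP n = (s.map (fun β => X + C β)).prod := by
    rw [hmap, hfac, Finset.prod_eq_multiset_prod]
  rw [hprod]
  apply slc_prod
  intro β hβ
  rw [hs] at hβ
  obtain ⟨r, hr, rfl⟩ := Multiset.mem_map.1 hβ
  have : r ∈ pyS n := hr
  linarith [pyS_neg this]

theorem pyreneP_coeff_log_concave (n : ℕ) (hn : 1 ≤ n) (k : ℕ)
    (hk1 : 1 ≤ k) (hk2 : k ≤ 2 * n - 1) :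
    (pyreneP n).coeff (k - 1) * (pyreneP n).coeff (k + 1) ≤ ((pyreneP n).coeff k) ^ 2 := by
  have h := (pyreneP_slc n).2 (k : ℤ) (k : ℤ) le_rfl
  have e0 : eco (pyreneP n) (k : ℤ) = (pyreneP n).coeff k := by
    unfold eco
    rw [if_pos (by positivity)]
    norm_num
  have e1 : eco (pyreneP n) ((k : ℤ) - 1) = (pyreneP n).coeff (k - 1) := by
    unfold eco
    rw [if_pos (by omega)]
    congr 1 <;> omega
  have e2 : eco (pyreneP n) ((k : ℤ) + 1) = (pyreneP n).coeff (k + 1) := by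
    unfold eco
    rw [if_pos (by positivity)]
    congr 1 <;> omega
  rw [e0, e1, e2] at h
  rw [sq]
  exact h
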